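/- arXiv:1505.04075 — 4 statements merged into one kernel-verified Lean document; each statement's English description precedes it below -/
import Mathlib

section
/- T(n,k) = 0 whenever k > 1 + floor(n²/4), where T(n,k) is the number of Dyck paths of semi-length n with (sum of peak heights) minus (number of peaks) equal to k. -/
attribute [local instance] Classical.propDecidable

/-- The set of Dyck paths of semi-length `n`, encoded as the set `U ⊆ {0, …, 2n-1}` of
positions of up-steps, such that there are `n` up-steps and every prefix has at least
as many up-steps as down-steps. -/
noncomputable def dyckPaths (n : ℕ) : Finset (Finset ℕ) :=
  (Finset.range (2 * n)).powerset.filter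
    (fun U => U.card = n ∧ ∀ t ∈ Finset.range (2 * n + 1), t ≤ 2 * (U ∩ Finset.range t).card)

/-- The set of positions `i` at which the Dyck path (with up-step set `U`) has a peak:
an up-step at `i` immediately followed by a down-step at `i+1`. -/
def peakSet (n : ℕ) (U : Finset ℕ) : Finset ℕ :=
  (Finset.range (2 * n)).filter (fun i => i ∈ U ∧ i + 1 ∉ U ∧ i + 1 < 2 * n)

/-- The height of the peak at position `i`: the y-coordinate after the up-step at `i`. -/
def peakHeight (U : Finset ℕ) (i : ℕ) : ℕ :=
  2 * (U ∩ Finset.range (i + 1)).card - (i + 1)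

/-- The statistic (sum of peak heights) − (number of peaks) of a Dyck path. -/
def statDiff (n : ℕ) (U : Finset ℕ) : ℕ :=
  (∑ i ∈ peakSet n U, peakHeight U i) - (peakSet n U).card

/-- `T n k` is the number of Dyck paths of semi-length `n` with
(sum of peak heights) − (number of peaks) equal to `k`. -/
noncomputable def T (n k : ℕ) : ℕ :=
  ((dyckPaths n).filter (fun U => statDiff n U = k)).card

/-!
At a position `q` with `A` up-steps among the first `q + 1` steps, the height is `2A - (q + 1)`.
Every peak before `q` is followed by one of the `q + 1 - A` down-steps up to `q`, and every peak
after `q` is one of the `#U - A` later up-steps, so the height at `q` plus the number `p` of peaks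
is at most `#U + 1`. Summing over the peaks, the statistic is at most `p (#U - p) ≤ #U² / 4`.
-/

open Finset

lemma mul_tsub_le_sq_div_four (p m : ℕ) : p * (m - p) ≤ m ^ 2 / 4 := by
  rw [Nat.le_div_iff_mul_le (by norm_num)]
  rcases le_total p m with hpm | hmp
  · obtain ⟨r, rfl⟩ := Nat.exists_eq_add_of_le hpm
    rw [Nat.add_sub_cancel_left]
    nlinarith [sq_nonneg ((p : ℤ) - r)]
  · simp [Nat.sub_eq_zero_of_le hmp]

lemma peakSet_subset (n : ℕ) (U : Finset ℕ) : peakSet n U ⊆ U :=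
  fun _ hi => (mem_filter.1 hi).2.1

lemma card_peakSet_le (n : ℕ) (U : Finset ℕ) : #(peakSet n U) ≤ #U :=
  card_le_card (peakSet_subset n U)

lemma peakSet_subset_split (n q : ℕ) (U : Finset ℕ) :
    peakSet n U ⊆ ((range (q + 1) \ U).image (· - 1) ∪ {q}) ∪ (U \ range (q + 1)) := by
  intro j hj
  simp only [peakSet, mem_filter, mem_range] at hj
  obtain ⟨-, hjU, hj1U, -⟩ := hj
  simp only [mem_union, mem_image, mem_sdiff, mem_range, mem_singleton]
  rcases lt_trichotomy j q with hjq | rfl | hqj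
  · exact Or.inl (Or.inl ⟨j + 1, ⟨by omega, hj1U⟩, rfl⟩)
  · exact Or.inl (Or.inr rfl)
  · exact Or.inr ⟨hjU, by omega⟩

lemma card_peakSet_le_split (n q : ℕ) (U : Finset ℕ) :
    #(peakSet n U) ≤ #(range (q + 1) \ U) + 1 + #(U \ range (q + 1)) := by
  calc #(peakSet n U)
      ≤ #(((range (q + 1) \ U).image (· - 1) ∪ {q}) ∪ (U \ range (q + 1))) :=
        card_le_card (peakSet_subset_split n q U)
    _ ≤ #((range (q + 1) \ U).image (· - 1)) + #({q} : Finset ℕ) + #(U \ range (q + 1)) := by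
        grw [card_union_le, card_union_le]
    _ ≤ #(range (q + 1) \ U) + 1 + #(U \ range (q + 1)) := by
        grw [card_image_le, card_singleton]

lemma peakHeight_add_card_peakSet_le (n q : ℕ) (U : Finset ℕ) :
    peakHeight U q + #(peakSet n U) ≤ #U + 1 := by
  have hsplit := card_peakSet_le_split n q U
  have hdown := card_inter_add_card_sdiff (range (q + 1)) U
  have hup := card_inter_add_card_sdiff U (range (q + 1))
  rw [card_range, inter_comm] at hdown
  have := card_peakSet_le n U
  unfold peakHeight
  omega

lemma statDiff_le (n : ℕ) (U : Finset ℕ) : statDiff n U ≤ #U ^ 2 / 4 := by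
  set p := #(peakSet n U)
  have hsum : ∑ i ∈ peakSet n U, peakHeight U i ≤ p * (#U + 1 - p) := by
    simpa using sum_le_card_nsmul (peakSet n U) (peakHeight U) (#U + 1 - p)
      fun q _ => by have := peakHeight_add_card_peakSet_le n q U; omega
  have hp := card_peakSet_le n U
  calc statDiff n U ≤ p * (#U + 1 - p) - p := Nat.sub_le_sub_right hsum p
    _ = p * (#U - p) := by rw [Nat.sub_add_comm hp, Nat.mul_succ, Nat.add_sub_cancel]
    _ ≤ #U ^ 2 / 4 := mul_tsub_le_sq_div_four p #U

lemma card_of_mem_dyckPaths {n : ℕ} {U : Finset ℕ} (hU : U ∈ dyckPaths n) : #U = n := by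
  simp only [dyckPaths, mem_filter] at hU
  exact hU.2.1

/-- `T n k = 0` whenever `k > 1 + ⌊n²/4⌋`. -/
theorem T_eq_zero (n k : ℕ) (h : 1 + n ^ 2 / 4 < k) : T n k = 0 := by
  rw [T, card_eq_zero, filter_eq_empty_iff]
  intro U hU hstat
  have hbound := statDiff_le n U
  rw [card_of_mem_dyckPaths hU] at hbound
  omega
end

section
/- Let w = T_{i_1}^{m_1} T_{i_2}^{m_2} ⋯ T_{i_ℓ}^{m_ℓ} be a concatenation of segment words with i_j ≤ m_j for all j, m_1 < m_2 < ⋯ < m_ℓ, and i_1 < i_2 < ⋯ < i_ℓ. Then w is a homogeneous word. -/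
/-!
In a segment `T_i^m` the letter `a` is followed by `a - 1` unless `a = i`, and preceded by
`a + 1` unless `a = m`; a segment has no repeated letter. If `a` occurs both in `T_i^m` and in a
later segment `T_j^n`, then `i < j ≤ a ≤ m < n`, so the two occurrences are separated by the
`a - 1` right after the first one and the `a + 1` right before the second one.
-/

/-- `a` and `b` are neighbors in the type `A` Dynkin diagram, i.e. `|a - b| = 1`. -/
def Nbr (a b : ℕ) : Prop := a + 1 = b ∨ b + 1 = a

/-- A word `w` over the alphabet `{1, …, n}` is homogeneous: whenever two equal letters
occur at positions `r < s`, there exist positions `t, u` with `r < t < u < s` whose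
letters are both neighbors of the repeated letter. -/
def Homog (w : List ℕ) : Prop :=
  ∀ r s : ℕ, r < s → s < w.length → w.getD r 0 = w.getD s 0 →
    ∃ t u : ℕ, r < t ∧ t < u ∧ u < s ∧
      Nbr (w.getD t 0) (w.getD r 0) ∧ Nbr (w.getD u 0) (w.getD r 0)

/-- The decreasing segment word `T_i^j = [j, j-1, …, i+1, i]` (empty when `i > j`). -/
def segWord (i j : ℕ) : List ℕ :=
  (List.range' i (j + 1 - i)).reverse

lemma segWord_length (i j : ℕ) : (segWord i j).length = j + 1 - i := by
  simp [segWord]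

lemma segWord_getD {i j o : ℕ} (h : o < j + 1 - i) : (segWord i j).getD o 0 = j - o := by
  rw [List.getD_eq_getElem _ _ (by rwa [segWord_length])]
  simp only [segWord, List.getElem_reverse, List.getElem_range', List.length_range']
  omega

lemma mem_segWord {i j a : ℕ} : a ∈ segWord i j ↔ i ≤ a ∧ a ≤ j := by
  simp only [segWord, List.mem_reverse, List.mem_range'_1]
  omega

lemma nodup_segWord (i j : ℕ) : (segWord i j).Nodup :=
  List.nodup_reverse.mpr (List.nodup_range' ..)

lemma segWord_getD_succ {i j r : ℕ} (hr : r < (segWord i j).length)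
    (hi : i < (segWord i j).getD r 0) :
    r + 1 < (segWord i j).length ∧
      (segWord i j).getD (r + 1) 0 + 1 = (segWord i j).getD r 0 := by
  rw [segWord_length] at hr ⊢
  rw [segWord_getD hr] at hi ⊢
  refine ⟨by omega, ?_⟩
  rw [segWord_getD (by omega)]
  omega

lemma segWord_getD_pred {i j s : ℕ} (hs : s < (segWord i j).length)
    (hj : (segWord i j).getD s 0 < j) :
    0 < s ∧ (segWord i j).getD (s - 1) 0 = (segWord i j).getD s 0 + 1 := by
  rw [segWord_length] at hs
  rw [segWord_getD hs] at hj ⊢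
  refine ⟨by omega, ?_⟩
  rw [segWord_getD (by omega)]
  omega

lemma Homog.of_nodup {w : List ℕ} (hw : w.Nodup) : Homog w := by
  intro r s hrs hs hrs_eq
  rw [List.getD_eq_getElem _ _ (hrs.trans hs), List.getD_eq_getElem _ _ hs,
    hw.getElem_inj_iff] at hrs_eq
  omega

lemma Homog.append {u v : List ℕ} (hu : Homog u) (hv : Homog v)
    (hcross : ∀ r s, r < u.length → s < v.length → u.getD r 0 = v.getD s 0 →
      (r + 1 < u.length ∧ Nbr (u.getD (r + 1) 0) (u.getD r 0)) ∧
        (0 < s ∧ Nbr (v.getD (s - 1) 0) (v.getD s 0))) :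
    Homog (u ++ v) := by
  intro r s hrs hs hrs_eq
  rw [List.length_append] at hs
  rcases lt_or_ge s u.length with hsu | hsu
  · rw [List.getD_append _ _ _ _ (hrs.trans hsu), List.getD_append _ _ _ _ hsu] at hrs_eq
    obtain ⟨t, t', hrt, htt', ht's, ht, ht'⟩ := hu r s hrs hsu hrs_eq
    refine ⟨t, t', hrt, htt', ht's, ?_, ?_⟩ <;>
      rwa [List.getD_append _ _ _ _ (by omega), List.getD_append _ _ _ _ (by omega)]
  rcases lt_or_ge r u.length with hru | hru
  · rw [List.getD_append _ _ _ _ hru, List.getD_append_right _ _ _ _ hsu] at hrs_eq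
    obtain ⟨⟨hr1, hnext⟩, hs0, hprev⟩ := hcross r (s - u.length) hru (by omega) hrs_eq
    refine ⟨r + 1, s - 1, by omega, by omega, by omega, ?_, ?_⟩
    · rwa [List.getD_append _ _ _ _ hr1, List.getD_append _ _ _ _ hru]
    · rw [List.getD_append _ _ _ _ hru, hrs_eq, List.getD_append_right _ _ _ _ (by omega),
        show s - 1 - u.length = s - u.length - 1 by omega]
      exact hprev
  · rw [List.getD_append_right _ _ _ _ hru, List.getD_append_right _ _ _ _ hsu] at hrs_eq
    obtain ⟨t, t', hrt, htt', ht's, ht, ht'⟩ :=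
      hv (r - u.length) (s - u.length) (by omega) (by omega) hrs_eq
    refine ⟨t + u.length, t' + u.length, by omega, by omega, by omega, ?_, ?_⟩ <;>
      rwa [List.getD_append_right _ _ _ _ (by omega), List.getD_append_right _ _ _ _ hru,
        Nat.add_sub_cancel]

def segWords (ps : List (ℕ × ℕ)) : List ℕ :=
  (ps.map fun p => segWord p.1 p.2).flatten

@[simp]
lemma segWords_cons (p : ℕ × ℕ) (ps : List (ℕ × ℕ)) :
    segWords (p :: ps) = segWord p.1 p.2 ++ segWords ps := by
  simp [segWords]

lemma mem_segWords {ps : List (ℕ × ℕ)} {a : ℕ} :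
    a ∈ segWords ps ↔ ∃ q ∈ ps, q.1 ≤ a ∧ a ≤ q.2 := by
  simp [segWords, mem_segWord]

lemma segWords_getD_pred {ps : List (ℕ × ℕ)} {s : ℕ} (hs : s < (segWords ps).length)
    (htop : ∀ q ∈ ps, (segWords ps).getD s 0 < q.2) :
    0 < s ∧ (segWords ps).getD (s - 1) 0 = (segWords ps).getD s 0 + 1 := by
  induction ps generalizing s with
  | nil => simp [segWords] at hs
  | cons q ps ih =>
    simp only [segWords_cons, List.length_append, List.mem_cons, forall_eq_or_imp] at hs htop ⊢
    set n := (segWord q.1 q.2).length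
    rcases lt_or_ge s n with hsq | hsq
    · rw [List.getD_append _ _ _ _ hsq] at htop ⊢
      obtain ⟨hpos, hpred⟩ := segWord_getD_pred hsq htop.1
      exact ⟨hpos, by rwa [List.getD_append _ _ _ _ (by omega)]⟩
    · rw [List.getD_append_right _ _ _ _ hsq] at htop ⊢
      obtain ⟨hpos, hpred⟩ := ih (by omega) htop.2
      refine ⟨by omega, ?_⟩
      rwa [List.getD_append_right _ _ _ _ (by omega), show s - 1 - n = s - n - 1 by omega]

lemma homog_segWords {ps : List (ℕ × ℕ)} (hps : ps.Pairwise fun p q => p.1 < q.1 ∧ p.2 < q.2) :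
    Homog (segWords ps) := by
  induction ps with
  | nil => exact Homog.of_nodup List.nodup_nil
  | cons p ps ih =>
    rw [List.pairwise_cons] at hps
    rw [segWords_cons]
    refine (Homog.of_nodup (nodup_segWord p.1 p.2)).append (ih hps.2) ?_
    intro r s hr hs hrs
    have ha_seg := List.getD_eq_getElem _ 0 hr ▸ List.getElem_mem hr
    have ha_rest := hrs ▸ List.getD_eq_getElem _ 0 hs ▸ List.getElem_mem hs
    obtain ⟨q, hq, hqa, -⟩ := mem_segWords.mp ha_rest
    obtain ⟨hr1, hnext⟩ := segWord_getD_succ hr ((hps.1 q hq).1.trans_le hqa)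
    obtain ⟨hs0, hprev⟩ := segWords_getD_pred hs fun q' hq' =>
      hrs ▸ (mem_segWord.mp ha_seg).2.trans_lt (hps.1 q' hq').2
    exact ⟨⟨hr1, .inl hnext⟩, hs0, .inr hprev.symm⟩

theorem canonical_word_homog_general (ps : List (ℕ × ℕ))
    (hchain : List.Chain' (fun p q => p.1 < q.1 ∧ p.2 < q.2) ps) :
    Homog ((ps.map (fun p => segWord p.1 p.2)).flatten) := by
  have : Trans (fun p q : ℕ × ℕ => p.1 < q.1 ∧ p.2 < q.2)
      (fun p q : ℕ × ℕ => p.1 < q.1 ∧ p.2 < q.2) (fun p q : ℕ × ℕ => p.1 < q.1 ∧ p.2 < q.2) :=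
    ⟨fun h₁ h₂ => ⟨h₁.1.trans h₂.1, h₁.2.trans h₂.2⟩⟩
  exact homog_segWords (List.isChain_iff_pairwise.mp hchain)

/-- A concatenation `T_{i_1}^{m_1} T_{i_2}^{m_2} ⋯ T_{i_ℓ}^{m_ℓ}` of segment words with
`i_j ≤ m_j` for all `j`, `i_1 < i_2 < ⋯ < i_ℓ` and `m_1 < m_2 < ⋯ < m_ℓ`
is a homogeneous word. -/
theorem canonical_word_homog (ps : List (ℕ × ℕ))
    (hle : ∀ p ∈ ps, p.1 ≤ p.2)
    (hchain : List.Chain' (fun p q => p.1 < q.1 ∧ p.2 < q.2) ps) :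
    Homog ((ps.map (fun p => segWord p.1 p.2)).flatten) :=
  canonical_word_homog_general ps hchain
end

section
/- The number of Dyck paths of semi-length n with (sum of peak heights) − (number of peaks) = 1 is n − 1, for n ≥ 2. -/
attribute [local instance] Classical.propDecidable

/-!
Let `h` be the height function of a Dyck path. Every peak has height at least one, so the
statistic is `∑ (peak height - 1)`, and a time where `h` is maximal is the apex of a peak;
hence statistic `1` forces `h ≤ 2`. Since `h t ≡ t [MOD 2]`, a path of height at most two
has `h t = t % 2` except at the times where `h = 2`, and these are exactly the apexes of the
peaks of height two, of which there is exactly one. Thus the path is `(UD)^i UUDD (UD)^(n-2-i)`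
for one of the `n - 1` values `0 ≤ i ≤ n - 2`.
-/

namespace DyckPath

open Finset

def height (U : Finset ℕ) (t : ℕ) : ℕ := 2 * (U ∩ range t).card - t

lemma peakHeight_eq_height (U : Finset ℕ) (p : ℕ) : peakHeight U p = height U (p + 1) := rfl

lemma height_zero (U : Finset ℕ) : height U 0 = 0 := by simp [height]

lemma card_inter_range_succ (U : Finset ℕ) (t : ℕ) :
    (U ∩ range (t + 1)).card = (U ∩ range t).card + if t ∈ U then 1 else 0 := by
  rw [range_add_one]
  split_ifs with ht
  · rw [inter_insert_of_mem ht, card_insert_of_notMem (by simp)]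
  · rw [inter_insert_of_notMem ht, add_zero]

lemma mem_dyckPaths {n : ℕ} {U : Finset ℕ} :
    U ∈ dyckPaths n ↔
      U ⊆ range (2 * n) ∧ U.card = n ∧ ∀ t ≤ 2 * n, t ≤ 2 * (U ∩ range t).card := by
  simp only [dyckPaths, mem_filter, mem_powerset, mem_range, Nat.lt_succ_iff]

def pathOfHeights (n : ℕ) (f : ℕ → ℕ) : Finset ℕ :=
  (range (2 * n)).filter fun t => f (t + 1) = f t + 1

lemma pathOfHeights_congr {n : ℕ} {f g : ℕ → ℕ} (hfg : ∀ t ≤ 2 * n, f t = g t) :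
    pathOfHeights n f = pathOfHeights n g :=
  filter_congr fun t ht => by
    rw [mem_range] at ht
    rw [hfg t ht.le, hfg (t + 1) ht]

section OfHeights

variable {n : ℕ} {f : ℕ → ℕ} (h0 : f 0 = 0)
  (hstep : ∀ t < 2 * n, f (t + 1) = f t + 1 ∨ f t = f (t + 1) + 1)
include h0 hstep

lemma two_mul_card_pathOfHeights_inter_range {t : ℕ} (ht : t ≤ 2 * n) :
    2 * (pathOfHeights n f ∩ range t).card = t + f t := by
  induction t with
  | zero => simp [h0]
  | succ t ih =>
    have hmem : t ∈ pathOfHeights n f ↔ f (t + 1) = f t + 1 := by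
      simp [pathOfHeights, show t < 2 * n by omega]
    rw [card_inter_range_succ, mul_add, ih (by omega)]
    rcases hstep t (by omega) with hup | hdown
    · rw [if_pos (hmem.2 hup)]; omega
    · rw [if_neg (by rw [hmem]; omega)]; omega

lemma height_pathOfHeights {t : ℕ} (ht : t ≤ 2 * n) : height (pathOfHeights n f) t = f t := by
  have := two_mul_card_pathOfHeights_inter_range h0 hstep ht
  rw [height]
  omega

lemma pathOfHeights_mem_dyckPaths (hend : f (2 * n) = 0) : pathOfHeights n f ∈ dyckPaths n := by
  have hsub : pathOfHeights n f ⊆ range (2 * n) := filter_subset _ _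
  refine mem_dyckPaths.2 ⟨hsub, ?_, fun t ht => ?_⟩
  · have := two_mul_card_pathOfHeights_inter_range h0 hstep le_rfl
    rw [inter_eq_left.2 hsub, hend] at this
    omega
  · have := two_mul_card_pathOfHeights_inter_range h0 hstep ht
    omega

end OfHeights

section Dyck

variable {n : ℕ} {U : Finset ℕ} (hU : U ∈ dyckPaths n)
include hU

lemma subset_range : U ⊆ range (2 * n) :=
  (mem_dyckPaths.1 hU).1

lemma two_mul_card_inter_range {t : ℕ} (ht : t ≤ 2 * n) :
    2 * (U ∩ range t).card = t + height U t := by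
  have := (mem_dyckPaths.1 hU).2.2 t ht
  rw [height]
  omega

lemma height_two_mul : height U (2 * n) = 0 := by
  rw [height, inter_eq_left.2 (subset_range hU), (mem_dyckPaths.1 hU).2.1]
  omega

lemma height_mod_two {t : ℕ} (ht : t ≤ 2 * n) : height U t % 2 = t % 2 := by
  have := two_mul_card_inter_range hU ht
  omega

lemma height_succ_of_mem {t : ℕ} (ht : t < 2 * n) (htU : t ∈ U) :
    height U (t + 1) = height U t + 1 := by
  have h₁ := two_mul_card_inter_range hU ht.le
  have h₂ := two_mul_card_inter_range hU (t := t + 1) ht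
  rw [card_inter_range_succ, if_pos htU] at h₂
  omega

lemma height_of_notMem {t : ℕ} (ht : t < 2 * n) (htU : t ∉ U) :
    height U t = height U (t + 1) + 1 := by
  have h₁ := two_mul_card_inter_range hU ht.le
  have h₂ := two_mul_card_inter_range hU (t := t + 1) ht
  rw [card_inter_range_succ, if_neg htU] at h₂
  omega

lemma pathOfHeights_height : pathOfHeights n (height U) = U := by
  ext t
  simp only [pathOfHeights, mem_filter, mem_range]
  constructor
  · rintro ⟨ht, hup⟩
    by_contra htU
    have := height_of_notMem hU ht htU
    omega
  · intro htU
    have ht := mem_range.1 (subset_range hU htU)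
    exact ⟨ht, height_succ_of_mem hU ht htU⟩

lemma one_le_peakHeight {p : ℕ} (hp : p ∈ peakSet n U) : 1 ≤ peakHeight U p := by
  obtain ⟨hp, hpU, -⟩ := mem_filter.1 hp
  rw [peakHeight_eq_height, height_succ_of_mem hU (mem_range.1 hp) hpU]
  omega

lemma statDiff_eq_sum : statDiff n U = ∑ p ∈ peakSet n U, (peakHeight U p - 1) := by
  rw [sum_tsub_distrib _ fun p hp => one_le_peakHeight hU hp, sum_const, smul_eq_mul, mul_one,
    statDiff]

lemma sub_one_mem_peakSet {t : ℕ} (ht : t ≤ 2 * n) (hpos : 1 ≤ height U t)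
    (hmax : ∀ s ≤ 2 * n, height U s ≤ height U t) : t - 1 ∈ peakSet n U := by
  have ht₀ : t ≠ 0 := by rintro rfl; rw [height_zero] at hpos; omega
  have ht₂ : t ≠ 2 * n := by rintro rfl; rw [height_two_mul hU] at hpos; omega
  have htU : t ∉ U := fun htU => by
    have := height_succ_of_mem hU (by omega) htU
    have := hmax (t + 1) (by omega)
    omega
  have hprev : t - 1 ∈ U := by
    by_contra hprev
    have hdown := height_of_notMem hU (t := t - 1) (by omega) hprev
    rw [Nat.sub_add_cancel (by omega)] at hdown
    have := hmax (t - 1) (by omega)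
    omega
  refine mem_filter.2 ⟨mem_range.2 (by omega), hprev, ?_, by omega⟩
  rwa [Nat.sub_add_cancel (by omega)]

lemma height_le_statDiff_add_one {t : ℕ} (ht : t ≤ 2 * n) : height U t ≤ statDiff n U + 1 := by
  obtain ⟨m, hm, hmax⟩ := exists_max_image (range (2 * n + 1)) (height U) nonempty_range_add_one
  have hmax' : ∀ s ≤ 2 * n, height U s ≤ height U m :=
    fun s hs => hmax s (mem_range.2 (by omega))
  rcases Nat.eq_zero_or_pos (height U t) with h | h
  · omega
  have hpeak := sub_one_mem_peakSet hU (mem_range_succ_iff.1 hm) ((hmax' t ht).trans' h) hmax'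
  have hm₀ : m ≠ 0 := by rintro rfl; have := hmax' t ht; rw [height_zero] at this; omega
  have := single_le_sum (f := fun p => peakHeight U p - 1) (fun _ _ => Nat.zero_le _) hpeak
  rw [← statDiff_eq_sum hU, peakHeight_eq_height, Nat.sub_add_cancel (by omega)] at this
  have := hmax' t ht
  omega

/-- For paths of height at most two the peaks of height two correspond, via their apexes,
to the times at height two. -/
lemma statDiff_eq_card_height_eq_two (hle : ∀ t ≤ 2 * n, height U t ≤ 2) :
    statDiff n U = ((range (2 * n + 1)).filter fun t => height U t = 2).card := by
  have hterm : ∀ p ∈ peakSet n U, peakHeight U p - 1 = if peakHeight U p = 2 then 1 else 0 := by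
    intro p hp
    have h₁ := one_le_peakHeight hU hp
    have h₂ := hle (p + 1) (by have := (mem_filter.1 hp).2.2.2; omega)
    rw [← peakHeight_eq_height] at h₂
    split_ifs <;> omega
  rw [statDiff_eq_sum hU, sum_congr rfl hterm, sum_boole, Nat.cast_id]
  refine card_nbij' (· + 1) (· - 1) ?_ ?_ ?_ ?_
  · intro p hp
    obtain ⟨hp, hp2⟩ := mem_filter.1 hp
    have := (mem_filter.1 hp).2.2.2
    exact mem_filter.2 ⟨mem_range.2 (by simp only; omega), hp2⟩
  · intro t ht
    obtain ⟨ht, ht2⟩ := mem_filter.1 ht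
    have ht₀ : t ≠ 0 := by rintro rfl; rw [height_zero] at ht2; omega
    refine mem_filter.2 ⟨sub_one_mem_peakSet hU (by simpa [Nat.lt_succ_iff] using ht)
      (by omega) (fun s hs => ht2 ▸ hle s hs), ?_⟩
    rwa [peakHeight_eq_height, Nat.sub_add_cancel (by omega)]
  · intro p _
    simp
  · intro t ht
    have ht₀ : t ≠ 0 := by
      rintro rfl; have := (mem_filter.1 ht).2; rw [height_zero] at this; omega
    simp only
    omega

end Dyck

/-- The height profile of `(UD)^i UUDD (UD)^(n-2-i)`. -/
def bumpHeight (i t : ℕ) : ℕ := if t = 2 * i + 2 then 2 else t % 2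

section Bump

variable {n i : ℕ}

lemma bumpHeight_step (t : ℕ) :
    bumpHeight i (t + 1) = bumpHeight i t + 1 ∨ bumpHeight i t = bumpHeight i (t + 1) + 1 := by
  unfold bumpHeight
  split_ifs <;> omega

lemma bumpPath_mem_dyckPaths (hi : i + 2 ≤ n) : pathOfHeights n (bumpHeight i) ∈ dyckPaths n :=
  pathOfHeights_mem_dyckPaths (by simp [bumpHeight]) (fun t _ => bumpHeight_step t)
    (by unfold bumpHeight; split_ifs <;> omega)

lemma height_bumpPath {t : ℕ} (ht : t ≤ 2 * n) :
    height (pathOfHeights n (bumpHeight i)) t = bumpHeight i t :=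
  height_pathOfHeights (by simp [bumpHeight]) (fun t _ => bumpHeight_step t) ht

lemma statDiff_bumpPath (hi : i + 2 ≤ n) : statDiff n (pathOfHeights n (bumpHeight i)) = 1 := by
  have hU := bumpPath_mem_dyckPaths hi
  have hle : ∀ t ≤ 2 * n, height (pathOfHeights n (bumpHeight i)) t ≤ 2 := by
    intro t ht
    rw [height_bumpPath ht, bumpHeight]
    split_ifs <;> omega
  rw [statDiff_eq_card_height_eq_two hU hle, card_eq_one]
  refine ⟨2 * i + 2, eq_singleton_iff_unique_mem.2 ⟨?_, fun t ht => ?_⟩⟩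
  · simp only [mem_filter, mem_range]
    rw [height_bumpPath (by omega), bumpHeight, if_pos rfl]
    exact ⟨by omega, rfl⟩
  · obtain ⟨ht, ht2⟩ := mem_filter.1 ht
    rw [height_bumpPath (by simpa [Nat.lt_succ_iff] using ht), bumpHeight] at ht2
    split_ifs at ht2 with h <;> omega

lemma bumpPath_injOn :
    Set.InjOn (fun i => pathOfHeights n (bumpHeight i)) (range (n - 1) : Set ℕ) := by
  intro i hi j _ hij
  have hi : i + 2 ≤ n := by rw [coe_range, Set.mem_Iio] at hi; omega
  have := height_bumpPath (i := i) (n := n) (t := 2 * i + 2) (by omega)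
  rw [show pathOfHeights n (bumpHeight i) = pathOfHeights n (bumpHeight j) from hij,
    height_bumpPath (by omega)] at this
  unfold bumpHeight at this
  split_ifs at this <;> omega

end Bump

lemma exists_height_eq_bumpHeight {n : ℕ} {U : Finset ℕ} (hU : U ∈ dyckPaths n)
    (hstat : statDiff n U = 1) : ∃ i, i + 2 ≤ n ∧ ∀ t ≤ 2 * n, height U t = bumpHeight i t := by
  have hle : ∀ t ≤ 2 * n, height U t ≤ 2 := fun t ht => by
    simpa [hstat] using height_le_statDiff_add_one hU ht
  obtain ⟨τ, hτ⟩ := card_eq_one.1 (hstat ▸ statDiff_eq_card_height_eq_two hU hle).symm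
  have hτmem : τ ∈ (range (2 * n + 1)).filter fun t => height U t = 2 := hτ ▸ mem_singleton_self τ
  obtain ⟨hτle, hτ2⟩ := mem_filter.1 hτmem
  rw [mem_range] at hτle
  have hτpar := height_mod_two hU (t := τ) (by omega)
  have hτ₀ : τ ≠ 0 := by rintro rfl; rw [height_zero] at hτ2; omega
  have hτ₂ : τ ≠ 2 * n := by rintro rfl; rw [height_two_mul hU] at hτ2; omega
  refine ⟨τ / 2 - 1, by omega, fun t ht => ?_⟩
  have htpar := height_mod_two hU ht
  have huniq : height U t = 2 → t = τ := fun h2 =>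
    mem_singleton.1 (hτ ▸ mem_filter.2 ⟨mem_range.2 (by omega), h2⟩)
  have := hle t ht
  unfold bumpHeight
  split_ifs with h
  · rw [show t = τ by omega, hτ2]
  · have := mt huniq (by omega)
    omega

lemma statDiff_eq_one_iff {n : ℕ} {U : Finset ℕ} :
    U ∈ dyckPaths n ∧ statDiff n U = 1 ↔
      ∃ i ∈ range (n - 1), pathOfHeights n (bumpHeight i) = U := by
  constructor
  · rintro ⟨hU, hstat⟩
    obtain ⟨i, hi, hheight⟩ := exists_height_eq_bumpHeight hU hstat
    refine ⟨i, mem_range.2 (by omega), ?_⟩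
    rw [← pathOfHeights_height hU, pathOfHeights_congr hheight]
  · rintro ⟨i, hi, rfl⟩
    have hi : i + 2 ≤ n := by have := mem_range.1 hi; omega
    exact ⟨bumpPath_mem_dyckPaths hi, statDiff_bumpPath hi⟩

end DyckPath

theorem T_one_general (n : ℕ) : T n 1 = n - 1 := by
  have hset : (dyckPaths n).filter (fun U => statDiff n U = 1) =
      (Finset.range (n - 1)).image fun i => DyckPath.pathOfHeights n (DyckPath.bumpHeight i) := by
    ext U
    rw [Finset.mem_filter, Finset.mem_image, DyckPath.statDiff_eq_one_iff]
  rw [T, hset, Finset.card_image_of_injOn DyckPath.bumpPath_injOn, Finset.card_range]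

/-- For `n ≥ 2`, the number of Dyck paths of semi-length `n` with
(sum of peak heights) − (number of peaks) `= 1` is `n − 1`. -/
theorem T_one (n : ℕ) (hn : 2 ≤ n) : T n 1 = n - 1 :=
  T_one_general n
end

section
/- Let w = s_{i_1} s_{i_2} ⋯ s_{i_d} be a reduced expression in a simply-laced Coxeter group. If between every pair of consecutive occurrences of any generator s_i there are exactly two letters not commuting with s_i, and after the last occurrence of each generator s_i there is at most one letter not commuting with s_i, then w is fully commutative (no reduced word for w contains a braid factor s_i s_j s_i with s_i s_j ≠ s_j s_i). -/
/-!
For the word `l = i_1 ⋯ i_d` let `β_k = s_{i_d} ⋯ s_{i_{k+1}} α_{i_k}` be the roots of its right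
inversion sequence. If a weight `λ` satisfies `⟨λ, β_m⟩ = 1` for all `m > k`, then
`⟨λ, β_k⟩ = λ(α_{i_k}) - ⟨α_{i_{k+1}} + ⋯ + α_{i_d}, α_{i_k}⟩`. By condition (i) the number
`1 + ⟨α_{i_{k+1}} + ⋯ + α_{i_d}, α_{i_k}⟩` depends only on the letter `i_k`: between two
consecutive occurrences of a letter the tail sum changes by `-2 + 2 = 0`. Taking these numbers as
the values of `λ` makes `l` a `λ`-minuscule word in Stembridge's sense: `⟨λ, β_k⟩ = 1` for all `k`.

An inversion read off a reduced word for `w` occurs an odd number of times in the inversion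
sequence of every word for `w` (these parities form a cocycle on `W`), so its root is `±β_k` for
some `k` and pairs with `λ` to `±1`. A factor `iji` with `M i j = 3` in a reduced word yields
three inversions with roots `β`, `β + β'` and `β'`, and `±1 ± 1 ≠ ±1`.
-/

namespace List

theorem card_filter_Ico_getD_append {α : Type*} (p u v : List α) (d : α) (P : α → Prop)
    [DecidablePred P] :
    ((Finset.Ico p.length (p.length + u.length)).filter
      (fun t => P ((p ++ u ++ v).getD t d))).card = u.countP P := by
  induction u generalizing p with
  | nil => simp
  | cons x u ih =>
    have hp := ih (p ++ [x])
    simp only [length_append, length_singleton, append_assoc, cons_append, nil_append] at hp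
    have hx : (p ++ x :: (u ++ v)).getD p.length d = x := by simp
    rw [length_cons, show p.length + (u.length + 1) = p.length + 1 + u.length by omega,
      ← Finset.insert_Ico_add_one_left_eq_Ico (by omega), Finset.filter_insert, countP_cons, ← hp]
    simp only [append_assoc, cons_append, hx]
    by_cases hPx : P x <;> simp [hPx]

end List

namespace CoxeterMatrix

open Finsupp

variable {B : Type*} (M : CoxeterMatrix B)

/-- The Cartan matrix of `M` when `M` is simply laced (`M i j = 1` exactly when `i = j`). -/
def cartan (i j : B) : ℤ := if M i j = 1 then 2 else if M i j = 3 then -1 else 0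

theorem cartan_comm (i j : B) : M.cartan i j = M.cartan j i := by
  simp only [cartan, M.symmetric]

@[simp]
theorem cartan_self (i : B) : M.cartan i i = 2 := by simp [cartan]

theorem cartan_of_eq_two {i j : B} (h : M i j = 2) : M.cartan i j = 0 := by simp [cartan, h]

theorem cartan_of_eq_three {i j : B} (h : M i j = 3) : M.cartan i j = -1 := by
  simp [cartan, h]

theorem sum_map_cartan_of_notMem {i : B} {u : List B} (hi : i ∉ u) :
    (u.map (M.cartan · i)).sum = -(u.countP (fun b => M i b = 3) : ℤ) := by
  induction u with
  | nil => simp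
  | cons b u ih =>
    rw [List.mem_cons, not_or] at hi
    have hbi : M b i ≠ 1 := M.off_diagonal _ _ (Ne.symm hi.1)
    rw [List.map_cons, List.sum_cons, ih hi.2, List.countP_cons, cartan, if_neg hbi, M.symmetric]
    split_ifs <;> simp_all

noncomputable def cartanForm : LinearMap.BilinForm ℤ (B →₀ ℤ) :=
  linearCombination ℤ fun i => linearCombination ℤ (M.cartan i)

@[simp]
theorem cartanForm_single_single (i j : B) :
    M.cartanForm (single i 1) (single j 1) = M.cartan i j := by
  simp [cartanForm]

theorem cartanForm_comm (v w : B →₀ ℤ) : M.cartanForm v w = M.cartanForm w v := by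
  have hflip : M.cartanForm.flip = M.cartanForm := by
    ext i j
    simp [cartan_comm]
  exact LinearMap.congr_fun₂ hflip w v

noncomputable def simpleReflection (i : B) : (B →₀ ℤ) ≃ₗ[ℤ] (B →₀ ℤ) :=
  Module.reflection (x := single i 1) (f := M.cartanForm (single i 1)) (by simp)

theorem simpleReflection_apply (i : B) (v : B →₀ ℤ) :
    M.simpleReflection i v = v - M.cartanForm (single i 1) v • single i 1 :=
  Module.reflection_apply _ _

theorem simpleReflection_single_self (i : B) :
    M.simpleReflection i (single i 1) = -single i 1 :=
  Module.reflection_apply_self _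

theorem simpleReflection_single_of_eq_three {i j : B} (h : M i j = 3) :
    M.simpleReflection i (single j 1) = single j 1 + single i 1 := by
  rw [simpleReflection_apply, cartanForm_single_single, M.cartan_of_eq_three h]
  module

theorem cartanForm_simpleReflection (i : B) (v w : B →₀ ℤ) :
    M.cartanForm (M.simpleReflection i v) (M.simpleReflection i w) = M.cartanForm v w := by
  simp only [simpleReflection_apply, map_sub, map_smul, LinearMap.sub_apply, LinearMap.smul_apply,
    cartanForm_single_single, cartan_self, smul_eq_mul, M.cartanForm_comm v (single i 1)]
  ring

theorem isLiftable_simpleReflection (hsl : ∀ i j : B, i ≠ j → M i j = 2 ∨ M i j = 3) :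
    M.IsLiftable M.simpleReflection := by
  intro i j
  rcases eq_or_ne i j with rfl | hij
  · ext v : 1
    simp only [M.diagonal, pow_one, LinearEquiv.mul_apply, simpleReflection,
      Module.involutive_reflection _ v, LinearEquiv.coe_one, id_eq]
  have hsymm : M j i = M i j := M.symmetric j i
  ext v : 1
  rcases hsl i j hij with h | h
  · simp only [h, pow_succ, pow_zero, one_mul, LinearEquiv.mul_apply, simpleReflection_apply,
      map_sub, map_smul, cartanForm_single_single, cartan_self, M.cartan_of_eq_two h,
      M.cartan_of_eq_two (hsymm.trans h), LinearEquiv.coe_one, id_eq]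
    module
  · simp only [h, pow_succ, pow_zero, one_mul, LinearEquiv.mul_apply, simpleReflection_apply,
      map_sub, map_smul, cartanForm_single_single, cartan_self, M.cartan_of_eq_three h,
      M.cartan_of_eq_three (hsymm.trans h), LinearEquiv.coe_one, id_eq]
    module

/-- Stembridge's condition (i), read on the suffixes of the word. -/
def TwoNoncommutingBetweenRepeats (l : List B) : Prop :=
  ∀ i u v, i :: (u ++ i :: v) <:+ l → i ∉ u → u.countP (fun b => M i b = 3) = 2

theorem twoNoncommutingBetweenRepeats_of_getD {l : List B}
    (h : ∀ a b : ℕ, ∀ i : B, a < b → b < l.length → l.getD a i = i → l.getD b i = i →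
      (∀ c, a < c → c < b → l.getD c i ≠ i) →
      ((Finset.Ioo a b).filter (fun t => M i (l.getD t i) = 3)).card = 2) :
    M.TwoNoncommutingBetweenRepeats l := by
  rintro i u v ⟨p, rfl⟩ hiu
  have hp : p ++ i :: (u ++ i :: v) = (p ++ [i]) ++ (u ++ i :: v) := by simp
  have hlen : (p ++ [i]).length = p.length + 1 := by simp
  have hmid : ∀ c, p.length < c → c < p.length + 1 + u.length →
      (p ++ i :: (u ++ i :: v)).getD c i ≠ i := by
    intro c hc₁ hc₂
    rw [hp, List.getD_append_right _ _ _ _ (by omega), List.getD_append _ _ _ _ (by simp; omega),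
      List.getD_eq_getElem _ _ (by simp; omega)]
    exact fun h => hiu (h ▸ List.getElem_mem _)
  have hlast : (p ++ i :: (u ++ i :: v)).getD (p.length + 1 + u.length) i = i := by
    rw [hp, List.getD_append_right _ _ _ _ (by omega), List.getD_append_right _ _ _ _ (by simp)]
    simp
  have key := h p.length (p.length + 1 + u.length) i (by omega) (by simp; omega) (by simp)
    hlast hmid
  rw [← Finset.Ico_add_one_left_eq_Ioo, hp, ← hlen, ← List.append_assoc] at key
  exact (List.card_filter_Ico_getD_append (p ++ [i]) u (i :: v) i (M i · = 3)).symm.trans key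

variable [DecidableEq B]

def stembridgeWeight : List B → B → ℤ
  | [] => 0
  | a :: ω => Function.update (stembridgeWeight ω) a (1 + (ω.map (M.cartan · a)).sum)

theorem stembridgeWeight_eq {l : List B} (hl : M.TwoNoncommutingBetweenRepeats l) {a : B}
    {ω : List B} (h : a :: ω <:+ l) :
    M.stembridgeWeight l a = 1 + (ω.map (M.cartan · a)).sum := by
  induction l generalizing ω with
  | nil => simp at h
  | cons b l ih =>
    have hl' : M.TwoNoncommutingBetweenRepeats l :=
      fun i u v h' => hl i u v (h'.trans (List.suffix_cons b l))
    rcases List.suffix_cons_iff.mp h with heq | hsuf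
    · obtain ⟨rfl, rfl⟩ := List.cons.inj heq
      simp [stembridgeWeight]
    rcases eq_or_ne a b with rfl | hab
    · obtain ⟨u, v, hau, rfl, -⟩ := List.exists_erase_eq (hsuf.subset List.mem_cons_self)
      -- the gap `u` contributes `-2`, the occurrence of `a` closing it `+2`
      have hgap := M.sum_map_cartan_of_notMem hau
      rw [hl a u v List.suffix_rfl hau] at hgap
      rw [stembridgeWeight, Function.update_self, ← ih hl' hsuf, ih hl' (List.suffix_append u _)]
      simp [hgap]
    · rw [stembridgeWeight, Function.update_of_ne hab, ih hl' hsuf]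

end CoxeterMatrix

namespace CoxeterSystem

open Finsupp

variable {B W : Type*} [Group W] {M : CoxeterMatrix B} (cs : CoxeterSystem M W)

local prefix:100 "s" => cs.simple
local prefix:100 "π" => cs.wordProd
local prefix:100 "ris" => cs.rightInvSeq

theorem prod_map_alternatingWord_two_mul {G : Type*} [Monoid G] (f : B → G) (i j : B) (m : ℕ) :
    ((alternatingWord i j (2 * m)).map f).prod = (f i * f j) ^ m := by
  induction m with
  | zero => simp [alternatingWord]
  | succ m ih =>
    rw [show 2 * (m + 1) = 2 * m + 1 + 1 by ring, alternatingWord_succ', alternatingWord_succ']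
    simp [ih, pow_succ', mul_assoc]

theorem wordProd_alternatingWord_add_two_mul (i j : B) (n : ℕ) :
    π (alternatingWord i j (n + 2 * M i j)) = π (alternatingWord i j n) := by
  simp only [prod_alternatingWord_eq_mul_pow, Nat.add_mul_div_left _ _ two_pos, pow_add,
    simple_mul_simple_pow, mul_one, Nat.even_add, even_two_mul, iff_true]

theorem reverse_alternatingWord_two_mul (i j : B) (m : ℕ) :
    (alternatingWord i j (2 * m)).reverse = alternatingWord j i (2 * m) := by
  induction m with
  | zero => rfl
  | succ m ih =>
    rw [show 2 * (m + 1) = 2 * m + 1 + 1 by ring, alternatingWord_succ', alternatingWord_succ',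
      alternatingWord_succ, alternatingWord_succ]
    simp [ih]

theorem lift_apply_wordProd {G : Type*} [Monoid G] {f : B → G} (hf : M.IsLiftable f)
    (ω : List B) : cs.lift ⟨f, hf⟩ (π ω) = (ω.map f).prod := by
  rw [wordProd, map_list_prod, List.map_map]
  exact congrArg List.prod (List.map_congr_left fun i _ => cs.lift_apply_simple hf i)

theorem mem_rightInvSeq_iff {ω : List B} {t : W} :
    t ∈ ris ω ↔ ∃ a ω', a :: ω' <:+ ω ∧ (π ω')⁻¹ * s a * π ω' = t := by
  induction ω with
  | nil => simp
  | cons b ω ih =>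
    simp only [rightInvSeq, List.mem_cons, ih, List.suffix_cons_iff, List.cons.injEq]
    constructor
    · rintro (rfl | ⟨a, ω', h, rfl⟩)
      · exact ⟨b, ω, Or.inl ⟨rfl, rfl⟩, rfl⟩
      · exact ⟨a, ω', Or.inr h, rfl⟩
    · rintro ⟨a, ω', (⟨rfl, rfl⟩ | h), rfl⟩
      · exact Or.inl rfl
      · exact Or.inr ⟨a, ω', h, rfl⟩

section ReflectionCocycle

variable [DecidableEq W]

/-- `sᵢ` acts by `(t, e) ↦ (sᵢ t sᵢ, e + [t = sᵢ])`. Lifting this action to `W` shows that the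
parity of the number of occurrences of `t` in `ris ω` depends only on `π ω`. -/
def reflectionCocycle (i : B) : Equiv.Perm (W × ZMod 2) :=
  Function.Involutive.toPerm (fun x => (s i * x.1 * s i, x.2 + if x.1 = s i then 1 else 0))
    (by
      rintro ⟨t, e⟩
      by_cases ht : t = s i
      · subst ht
        simp [add_assoc, CharTwo.add_self_eq_zero]
      · have hconj : s i * t * s i ≠ s i := fun h =>
          ht (by simpa [mul_assoc] using congrArg (fun x => s i * x * s i) h)
        simp only [ht, hconj, if_false, add_zero]
        simp [mul_assoc])

theorem reflectionCocycle_apply (i : B) (t : W) (e : ZMod 2) :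
    cs.reflectionCocycle i (t, e) = (s i * t * s i, e + if t = s i then 1 else 0) :=
  rfl

theorem prod_map_reflectionCocycle_apply (ω : List B) (t : W) (e : ZMod 2) :
    (ω.map cs.reflectionCocycle).prod (t, e) = (π ω * t * (π ω)⁻¹, e + (ris ω).count t) := by
  induction ω generalizing e with
  | nil => simp
  | cons i ω ih =>
    have hconj : π ω * t * (π ω)⁻¹ = s i ↔ (π ω)⁻¹ * s i * π ω = t := by
      constructor <;> intro h <;> rw [← h] <;> group
    simp only [List.map_cons, List.prod_cons, Equiv.Perm.mul_apply, ih, reflectionCocycle_apply,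
      rightInvSeq, List.count_cons, wordProd_cons, hconj, beq_iff_eq, Nat.cast_add, add_assoc,
      Nat.cast_ite, Nat.cast_one, Nat.cast_zero, mul_inv_rev, inv_simple, Prod.mk.injEq, and_true]
    group

theorem even_count_rightInvSeq_alternatingWord (i j : B) (t : W) :
    Even ((ris (alternatingWord i j (2 * M i j))).count t) := by
  -- the left inversion sequence of `(s j s i)^(M i j)` is periodic with period `M i j`
  set L := cs.leftInvSeq (alternatingWord j i (2 * M i j))
  have hL : L.drop (M i j) = L.take (M i j) := by
    apply List.ext_getElem (by simp [L]; omega)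
    intro k h₁ h₂
    simp only [List.length_drop, L, length_leftInvSeq, length_alternatingWord] at h₁
    simp only [List.getElem_drop, List.getElem_take, L]
    rw [getElem_leftInvSeq_alternatingWord _ _ _ _ _ (by omega),
      getElem_leftInvSeq_alternatingWord _ _ _ _ _ (by omega),
      show 2 * (M i j + k) + 1 = 2 * k + 1 + 2 * M i j by ring,
      wordProd_alternatingWord_add_two_mul]
  have hris : ris (alternatingWord i j (2 * M i j)) = L.reverse := by
    rw [← reverse_alternatingWord_two_mul, rightInvSeq_reverse]
  rw [hris, List.count_reverse, ← List.take_append_drop (M i j) L, List.count_append, hL]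
  exact ⟨_, rfl⟩

theorem isLiftable_reflectionCocycle : M.IsLiftable cs.reflectionCocycle := by
  intro i j
  ext ⟨t, e⟩ : 1
  rw [← prod_map_alternatingWord_two_mul, prod_map_reflectionCocycle_apply,
    ← zero_add (2 * M i j), wordProd_alternatingWord_add_two_mul, zero_add,
    ZMod.natCast_eq_zero_iff_even.mpr (cs.even_count_rightInvSeq_alternatingWord i j t)]
  simp [alternatingWord]

theorem natCast_count_rightInvSeq_eq {ω ω' : List B} (h : π ω = π ω') (t : W) :
    ((ris ω).count t : ZMod 2) = (ris ω').count t := by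
  have key := congrArg (fun g : Equiv.Perm (W × ZMod 2) => (g (t, 0)).2)
    (congrArg (cs.lift ⟨_, cs.isLiftable_reflectionCocycle⟩) h)
  simpa [lift_apply_wordProd, prod_map_reflectionCocycle_apply] using key

end ReflectionCocycle

theorem mem_rightInvSeq_of_wordProd_eq {ω ω' : List B} (hω' : cs.IsReduced ω')
    (h : π ω = π ω') {t : W} (ht : t ∈ ris ω') : t ∈ ris ω := by
  classical
  have hodd := cs.natCast_count_rightInvSeq_eq h t
  rw [List.count_eq_one_of_mem hω'.nodup_rightInvSeq ht] at hodd
  by_contra hmem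
  rw [List.count_eq_zero.mpr hmem] at hodd
  exact absurd hodd (by decide)

section RootRepresentation

variable (hsl : ∀ i j : B, i ≠ j → M i j = 2 ∨ M i j = 3)

noncomputable def rootRepresentation : W →* (B →₀ ℤ) ≃ₗ[ℤ] (B →₀ ℤ) :=
  cs.lift ⟨M.simpleReflection, M.isLiftable_simpleReflection hsl⟩

local notation "ρ" => cs.rootRepresentation hsl

theorem rootRepresentation_simple (i : B) : ρ (s i) = M.simpleReflection i :=
  cs.lift_apply_simple _ i

theorem rootRepresentation_mul_apply (u v : W) (x : B →₀ ℤ) : ρ (u * v) x = ρ u (ρ v x) := by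
  rw [map_mul, LinearEquiv.mul_apply]

theorem cartanForm_rootRepresentation (u : W) (x y : B →₀ ℤ) :
    M.cartanForm (ρ u x) (ρ u y) = M.cartanForm x y := by
  induction u using cs.simple_induction generalizing x y with
  | simple i => rw [rootRepresentation_simple, M.cartanForm_simpleReflection]
  | one => simp
  | mul u v hu hv => rw [rootRepresentation_mul_apply, rootRepresentation_mul_apply, hu, hv]

theorem rootRepresentation_single_eq_or_eq_neg {u v : W} {i j : B}
    (h : u * s i * u⁻¹ = v * s j * v⁻¹) :
    ρ u (single i 1) = ρ v (single j 1) ∨ ρ u (single i 1) = -ρ v (single j 1) := by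
  -- `γ` is negated by `sⱼ`, hence a multiple of `αⱼ`, and `⟨γ, γ⟩ = 2` forces `γ = ±αⱼ`
  set γ := ρ (v⁻¹ * u) (single i 1)
  have hγ : ρ u (single i 1) = ρ v γ := by
    rw [← rootRepresentation_mul_apply, mul_inv_cancel_left]
  have hneg : M.simpleReflection j γ = -γ := by
    have hcomm : s j * (v⁻¹ * u) = v⁻¹ * u * s i := by
      calc s j * (v⁻¹ * u) = v⁻¹ * (v * s j * v⁻¹) * u := by group
        _ = v⁻¹ * u * s i := by rw [← h]; group
    rw [← rootRepresentation_simple cs hsl, ← rootRepresentation_mul_apply, hcomm,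
      rootRepresentation_mul_apply, rootRepresentation_simple, M.simpleReflection_single_self,
      map_neg]
  set b := M.cartanForm (single j 1) γ
  have htwo : (2 : ℤ) • γ = b • single j 1 := by
    rw [M.simpleReflection_apply, sub_eq_iff_eq_add] at hneg
    rw [two_smul]
    nth_rewrite 1 [hneg]
    abel
  have hb : b ^ 2 = 2 ^ 2 := by
    have hnorm : M.cartanForm γ γ = 2 := by
      rw [cartanForm_rootRepresentation, M.cartanForm_single_single, M.cartan_self]
    have := congrArg (fun x => M.cartanForm x x) htwo
    simp only [map_smul, LinearMap.smul_apply, hnorm, M.cartanForm_single_single,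
      M.cartan_self, smul_eq_mul] at this
    nlinarith
  rw [hγ]
  rcases sq_eq_sq_iff_eq_or_eq_neg.mp hb with hb | hb
  · left
    rw [hb] at htwo
    rw [smul_right_injective _ two_ne_zero htwo]
  · right
    rw [hb, neg_smul, ← smul_neg] at htwo
    rw [smul_right_injective _ two_ne_zero htwo, map_neg]

/-- Stembridge's `λ`-minuscule condition `s_a s_ω λ = s_ω λ - α_a` for every suffix `a :: ω`
of `l`, i.e. `⟨λ, ω⁻¹ α_a⟩ = 1`, with the weight `λ` given as a linear form `wt` on the root
lattice `B →₀ ℤ`. -/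
def IsMinusculeWord (wt : (B →₀ ℤ) →ₗ[ℤ] ℤ) (l : List B) : Prop :=
  ∀ a ω, a :: ω <:+ l → wt (ρ (π ω)⁻¹ (single a 1)) = 1

theorem apply_rootRepresentation_wordProd_inv_single {wt : (B →₀ ℤ) →ₗ[ℤ] ℤ} {l : List B}
    (hwt : ∀ a ω, a :: ω <:+ l → wt (single a 1) = 1 + (ω.map (M.cartan · a)).sum)
    {ω : List B} (hω : ω <:+ l) (j : B) :
    wt (ρ (π ω)⁻¹ (single j 1)) = wt (single j 1) - (ω.map (M.cartan · j)).sum := by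
  induction ω generalizing j with
  | nil => simp
  | cons b ω ih =>
    have hω' : ω <:+ l := (List.suffix_cons b ω).trans hω
    rw [wordProd_cons, mul_inv_rev, inv_simple, rootRepresentation_mul_apply,
      rootRepresentation_simple, M.simpleReflection_apply, map_sub, map_smul, map_sub, map_smul,
      ih hω', ih hω', hwt b ω hω, M.cartanForm_single_single]
    simp only [List.map_cons, List.sum_cons, smul_eq_mul]
    ring

theorem isMinusculeWord_of_apply_single {wt : (B →₀ ℤ) →ₗ[ℤ] ℤ} {l : List B}
    (hwt : ∀ a ω, a :: ω <:+ l → wt (single a 1) = 1 + (ω.map (M.cartan · a)).sum) :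
    cs.IsMinusculeWord hsl wt l := fun a ω h => by
  rw [cs.apply_rootRepresentation_wordProd_inv_single hsl hwt ((List.suffix_cons a ω).trans h),
    hwt a ω h]
  ring

variable {cs hsl}

theorem IsMinusculeWord.apply_root_eq_one_or_neg_one {wt : (B →₀ ℤ) →ₗ[ℤ] ℤ} {l l' : List B}
    (hl : cs.IsMinusculeWord hsl wt l) (hl' : cs.IsReduced l') (h : π l' = π l) {a : B}
    {ω : List B} (hω : a :: ω <:+ l') :
    wt (ρ (π ω)⁻¹ (single a 1)) = 1 ∨ wt (ρ (π ω)⁻¹ (single a 1)) = -1 := by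
  have ht : (π ω)⁻¹ * s a * π ω ∈ ris l :=
    cs.mem_rightInvSeq_of_wordProd_eq hl' h.symm (cs.mem_rightInvSeq_iff.mpr ⟨a, ω, hω, rfl⟩)
  obtain ⟨b, ω', hω', hconj⟩ := cs.mem_rightInvSeq_iff.mp ht
  have hconj' : (π ω)⁻¹ * s a * (π ω)⁻¹⁻¹ = (π ω')⁻¹ * s b * (π ω')⁻¹⁻¹ := by
    simpa only [inv_inv] using hconj.symm
  rcases cs.rootRepresentation_single_eq_or_eq_neg hsl hconj' with he | he
  · rw [he, hl b ω' hω']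
    simp
  · rw [he, map_neg, hl b ω' hω']
    simp

theorem IsMinusculeWord.not_braid_infix {wt : (B →₀ ℤ) →ₗ[ℤ] ℤ} {l l' : List B}
    (hl : cs.IsMinusculeWord hsl wt l) (hl' : cs.IsReduced l') (h : π l' = π l) {i j : B}
    (hij : M i j = 3) : ¬ [i, j, i] <:+: l' := by
  rintro ⟨p, q, rfl⟩
  have h₁ : i :: j :: i :: q <:+ p ++ [i, j, i] ++ q := ⟨p, by simp⟩
  have h₂ := (List.suffix_cons i _).trans h₁
  have h₃ := (List.suffix_cons j _).trans h₂
  set x := wt (ρ (π q)⁻¹ (single i 1))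
  set y := wt (ρ (π q)⁻¹ (single j 1))
  have hxy : wt (ρ (π (i :: q))⁻¹ (single j 1)) = y + x := by
    rw [wordProd_cons, mul_inv_rev, inv_simple, rootRepresentation_mul_apply,
      rootRepresentation_simple, M.simpleReflection_single_of_eq_three hij, map_add, map_add]
  have hy : wt (ρ (π (j :: i :: q))⁻¹ (single i 1)) = y := by
    rw [wordProd_cons, wordProd_cons, mul_inv_rev, mul_inv_rev, inv_simple, inv_simple,
      rootRepresentation_mul_apply, rootRepresentation_mul_apply, rootRepresentation_simple,
      rootRepresentation_simple, M.simpleReflection_single_of_eq_three (M.symmetric i j ▸ hij),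
      map_add, M.simpleReflection_single_of_eq_three hij, M.simpleReflection_single_self,
      neg_add_cancel_comm_assoc]
  have hx₃ := hl.apply_root_eq_one_or_neg_one hl' h h₃
  have hxy₂ := hl.apply_root_eq_one_or_neg_one hl' h h₂
  have hy₁ := hl.apply_root_eq_one_or_neg_one hl' h h₁
  rw [hxy] at hxy₂
  rw [hy] at hy₁
  omega

end RootRepresentation

end CoxeterSystem

theorem fully_commutative_of_stembridge_conditions_general {B W : Type*} [Group W]
    (M : CoxeterMatrix B) (cs : CoxeterSystem M W)
    (hsl : ∀ i j : B, i ≠ j → M i j = 2 ∨ M i j = 3)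
    (w : W) (l : List B) (hw : cs.wordProd l = w)
    (h1 : ∀ a b : ℕ, ∀ i : B, a < b → b < l.length →
      l.getD a i = i → l.getD b i = i →
      (∀ c, a < c → c < b → l.getD c i ≠ i) →
      ((Finset.Ioo a b).filter (fun t => M i (l.getD t i) = 3)).card = 2) :
    ∀ l' : List B, cs.IsReduced l' → cs.wordProd l' = w →
      ∀ i j : B, M i j = 3 → ¬ ([i, j, i] <:+: l') := by
  classical
  intro l' hl' hl'w i j hij
  have hweight : ∀ a ω, a :: ω <:+ l → Finsupp.linearCombination ℤ (M.stembridgeWeight l)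
      (Finsupp.single a 1) = 1 + (ω.map (M.cartan · a)).sum := by
    intro a ω h
    rw [Finsupp.linearCombination_single, one_smul]
    exact M.stembridgeWeight_eq (M.twoNoncommutingBetweenRepeats_of_getD h1) h
  exact (cs.isMinusculeWord_of_apply_single hsl hweight).not_braid_infix hl'
    (hl'w.trans hw.symm) hij

/-- Stembridge's criterion: in a simply-laced Coxeter group, if a reduced expression
`w = s_{i_1} ⋯ s_{i_d}` has the property that between every pair of consecutive
occurrences of a generator `s_i` there are exactly two letters not commuting with `s_i`,
and after the last occurrence of each generator `s_i` there is at most one letter not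
commuting with `s_i`, then `w` is fully commutative: no reduced word for `w` contains a
braid factor `[i, j, i]` with `s_i s_j ≠ s_j s_i` (i.e. `M i j = 3`). -/
theorem fully_commutative_of_stembridge_conditions {B W : Type*} [Group W]
    (M : CoxeterMatrix B) (cs : CoxeterSystem M W)
    (hsl : ∀ i j : B, i ≠ j → M i j = 2 ∨ M i j = 3)
    (w : W) (l : List B) (hred : cs.IsReduced l) (hw : cs.wordProd l = w)
    (h1 : ∀ a b : ℕ, ∀ i : B, a < b → b < l.length →
      l.getD a i = i → l.getD b i = i →
      (∀ c, a < c → c < b → l.getD c i ≠ i) →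
      ((Finset.Ioo a b).filter (fun t => M i (l.getD t i) = 3)).card = 2)
    (h2 : ∀ a : ℕ, ∀ i : B, a < l.length → l.getD a i = i →
      (∀ c, a < c → c < l.length → l.getD c i ≠ i) →
      ((Finset.Ioo a l.length).filter (fun t => M i (l.getD t i) = 3)).card ≤ 1) :
    ∀ l' : List B, cs.IsReduced l' → cs.wordProd l' = w →
      ∀ i j : B, M i j = 3 → ¬ ([i, j, i] <:+: l') :=
  fully_commutative_of_stembridge_conditions_general M cs hsl w l hw h1
end
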